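/- Let r ≥ 1. Suppose x ∈ ℝ⁺ and P is a finite collection of bitiles with x ∈ I_P for each P ∈ P, and P = ⋃_{T∈T} T where T is either a collection of u-overlapping trees which are td-maximal among u-overlapping trees contained in P, or a properly-sorted collection of l-overlapping trees. Then for any collection of real coefficients {c_P}_{P∈P}, ‖ Σ_{P∈P} c_P 1_{ω_{P_u}} ‖_{V^r} ≤ C |T|^{1/r} · sup_{T∈T} ‖ Σ_{P∈T} c_P 1_{ω_{P_u}} ‖_{V^r}, where |T| is the number of trees in T and the V^r norms are of functions of ξ ∈ ℝ⁺. -/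

import Mathlib

open MeasureTheory Set Filter
open scoped ENNReal NNReal Classical BigOperators RealInnerProductSpace

noncomputable section

/-- The binary digit of `x` in position `n+1` to the left of the point
(terminating expansion for dyadic rationals). -/
def digit (n : ℤ) (x : ℝ) : ℤ := ⌊x / 2 ^ n⌋ % 2

/-- Bitwise addition `⊕` on nonnegative reals. -/
def wXor (x y : ℝ) : ℝ := ∑' n : ℤ, (((digit n x + digit n y) % 2 : ℤ) : ℝ) * 2 ^ n

/-- The `n`-th digit of the bitwise product `x ⊗ y`. -/
def wMulDigit (n : ℤ) (x y : ℝ) : ℤ :=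
  ⌊∑' m : ℤ, ((digit (n - m) x * digit m y : ℤ) : ℝ)⌋ % 2

/-- Bitwise multiplication `⊗` on nonnegative reals. -/
def wMul (x y : ℝ) : ℝ := ∑' n : ℤ, ((wMulDigit n x y : ℤ) : ℝ) * 2 ^ n

/-- The Walsh character `e(x) = exp (i π d₋₁(x))`. -/
def walshe (x : ℝ) : ℝ := (-1 : ℝ) ^ (digit (-1) x)

/-- The Walsh–Fourier transform on `ℝ⁺`; it is involutive, so it also serves
as the inverse Walsh–Fourier transform `ˇ`. -/
def walshFT (f : ℝ → ℝ) (ξ : ℝ) : ℝ := ∫ x in Set.Ici (0 : ℝ), walshe (wMul ξ x) * f x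

/-- Lebesgue measure on `ℝ⁺`. -/
def μplus : Measure ℝ := volume.restrict (Set.Ici 0)

/-- `L^p` norm (real exponent `p`) of an `ℝ≥0∞`-valued function. -/
def lpNormE (p : ℝ) (μ : Measure ℝ) (F : ℝ → ℝ≥0∞) : ℝ≥0∞ := (∫⁻ x, F x ^ p ∂μ) ^ (1 / p)

/-- The `r`-variation norm of `m` on the domain `D`. -/
def vnorm {ι E : Type*} [LinearOrder ι] [NormedAddCommGroup E] (r : ℝ) (D : Set ι)
    (m : ι → E) : ℝ≥0∞ :=
  (⨆ ξ ∈ D, (‖m ξ‖₊ : ℝ≥0∞)) +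
    ⨆ (N : ℕ) (u : Fin (N + 1) → ι) (_ : StrictMono u) (_ : ∀ i, u i ∈ D),
      (∑ i : Fin N, (‖m (u i.succ) - m (u i.castSucc)‖₊ : ℝ≥0∞) ^ r) ^ (1 / r)

/-- The Walsh `L^q`-multiplier norm. -/
def Mq (q : ℝ) (m : ℝ → ℝ) : ℝ≥0∞ :=
  ⨆ (g : ℝ → ℝ) (_ : eLpNorm g (ENNReal.ofReal q) μplus = 1),
    eLpNorm (walshFT fun ξ => m ξ * walshFT g ξ) (ENNReal.ofReal q) μplus

/-- The Walsh `L^q`-maximal-multiplier norm of a sequence of multipliers. -/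
def Mqstar (q : ℝ) (m : ℤ → ℝ → ℝ) : ℝ≥0∞ :=
  ⨆ (g : ℝ → ℝ) (_ : eLpNorm g (ENNReal.ofReal q) μplus = 1),
    lpNormE q μplus fun x => ⨆ k : ℤ, (‖walshFT (fun ξ => m k ξ * walshFT g ξ) x‖₊ : ℝ≥0∞)

/-- The `s`-variation `L^q`-multiplier norm of a sequence of multipliers. -/
def Mqs (q s : ℝ) (m : ℤ → ℝ → ℝ) : ℝ≥0∞ :=
  ⨆ (g : ℝ → ℝ) (_ : eLpNorm g (ENNReal.ofReal q) μplus = 1),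
    lpNormE q μplus fun x =>
      vnorm s (Set.univ : Set ℤ) fun k => walshFT (fun ξ => m k ξ * walshFT g ξ) x

/-- Dyadic intervals `[n 2^k, (n+1) 2^k)`. -/
def IsDyadic (I : Set ℝ) : Prop :=
  ∃ n k : ℤ, I = Set.Ico ((n : ℝ) * 2 ^ k) (((n : ℝ) + 1) * 2 ^ k)

/-- Dyadic intervals of length `2^k`. -/
def IsDyadicLen (k : ℤ) (ω : Set ℝ) : Prop :=
  ∃ n : ℤ, ω = Set.Ico ((n : ℝ) * 2 ^ k) (((n : ℝ) + 1) * 2 ^ k)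

/-- The lower half of an interval. -/
def lowerHalf (ω : Set ℝ) : Set ℝ := ω ∩ Set.Iio ((sInf ω + sSup ω) / 2)

/-- The upper half of an interval. -/
def upperHalf (ω : Set ℝ) : Set ℝ := ω ∩ Set.Ici ((sInf ω + sSup ω) / 2)

/-- A bitile `I × ω ⊆ ℝ⁺ × ℝ⁺` : a rectangle of dyadic intervals of area `2`. -/
structure Bitile where
  I : Set ℝ
  ω : Set ℝ
  hI : IsDyadic I
  hω : IsDyadic ω
  hIsub : I ⊆ Set.Ici 0
  hωsub : ω ⊆ Set.Ici 0
  harea : volume I * volume ω = 2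

/-- The `L²`-normalized Walsh wave packet of the tile `I × ω`. -/
def wavePacket (I ω : Set ℝ) (x : ℝ) : ℝ :=
  Real.sqrt (volume I).toReal * walshFT (Set.indicator ω fun _ => (1 : ℝ)) (wXor x (sInf I))

/-- `⟨f, φ_{P_l}⟩`, the pairing of `f` with the wave packet of the lower tile of `P`. -/
def walshCoef (P : Bitile) (f : ℝ → ℝ) : ℝ :=
  ∫ y in Set.Ici (0 : ℝ), f y * wavePacket P.I (lowerHalf P.ω) y

/-- The partial order on bitiles. -/
def Bitile.le (P Q : Bitile) : Prop := P.I ⊆ Q.I ∧ Q.ω ⊆ P.ω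

/-- Convexity of a set of bitiles. -/
def ConvexBitiles (S : Set Bitile) : Prop :=
  ∀ P₁ P₂ P₃ : Bitile, P₁ ∈ S → P₃ ∈ S → Bitile.le P₁ P₂ → Bitile.le P₂ P₃ → P₂ ∈ S

/-- The truncated partial Walsh-sum operator attached to a collection `Ps` of bitiles. -/
def Sk (Ps : Set Bitile) (f : ℝ → ℝ) (k : ℤ) (ξ x : ℝ) : ℝ :=
  ∑ᶠ (P : Bitile) (_ : P ∈ Ps ∧ volume P.I < 2 ^ k),
    walshCoef P f * wavePacket P.I (lowerHalf P.ω) x *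
      Set.indicator (upperHalf P.ω) (fun _ => (1 : ℝ)) ξ

/-- The partial Walsh-sum operator `S[f](ξ,x) = (f̂ 1_{[0,ξ)})ˇ(x)`. -/
def Spartial (f : ℝ → ℝ) (ξ x : ℝ) : ℝ :=
  walshFT (fun η => Set.indicator (Set.Ico 0 ξ) (fun _ => (1 : ℝ)) η * walshFT f η) x

/-- A tree of bitiles with top data `(ξtop, Itop)`. -/
structure WTree where
  carrier : Set Bitile
  ξtop : ℝ
  Itop : Set ℝ

/-- The defining conditions of a tree. -/
def IsTree (T : WTree) : Prop :=
  IsDyadic T.Itop ∧ 0 ≤ T.ξtop ∧ ∀ P ∈ T.carrier, P.I ⊆ T.Itop ∧ T.ξtop ∈ P.ω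

/-- `u`-overlapping trees. -/
def UOverlapping (T : WTree) : Prop := ∀ P ∈ T.carrier, T.ξtop ∈ upperHalf P.ω

/-- `l`-overlapping trees. -/
def LOverlapping (T : WTree) : Prop := ∀ P ∈ T.carrier, T.ξtop ∈ lowerHalf P.ω

/-- `T` is td-maximal among the trees in `Cc` : maximal with respect to inclusion among
trees in `Cc` with the same top data. -/
def TdMaximalAmong (T : WTree) (Cc : Set WTree) : Prop :=
  T ∈ Cc ∧ ∀ T' ∈ Cc, T'.ξtop = T.ξtop → T'.Itop = T.Itop →
    T.carrier ⊆ T'.carrier → T'.carrier ⊆ T.carrier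

/-- Order on the lower tiles of two bitiles. -/
def lowerLE (P Q : Bitile) : Prop := P.I ⊆ Q.I ∧ lowerHalf Q.ω ⊆ lowerHalf P.ω

/-- Strict order on the lower tiles of two bitiles. -/
def lowerLT (P Q : Bitile) : Prop := lowerLE P Q ∧ ¬ lowerLE Q P

/-- `l`-convexity of a set of bitiles. -/
def LConvex (S : Set Bitile) : Prop :=
  ∀ P P' P'' : Bitile, P ∈ S → P'' ∈ S → lowerLT P P' → lowerLT P' P'' → P' ∈ S

/-- A properly-sorted collection of `l`-overlapping trees. -/
def ProperlySorted (Ts : Set WTree) : Prop :=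
  (∀ T ∈ Ts, IsTree T ∧ LOverlapping T ∧ LConvex T.carrier) ∧
  (∀ T ∈ Ts, ∀ T' ∈ Ts, T ≠ T' → T.carrier ∩ T'.carrier = ∅) ∧
  (∀ T ∈ Ts, ∀ P ∈ T.carrier, ∀ T' ∈ Ts, (T'.Itop ∩ P.I).Nonempty → T'.ξtop ∉ upperHalf P.ω)

/-- The multiplier `𝒟_k = Σ_{|ω| = 2^k, ω ∩ Ξ ≠ ∅} a_ω 1_ω`. -/
def Dk (a : Set ℝ → ℝ) (Ξ : Set ℝ) (k : ℤ) (ξ : ℝ) : ℝ :=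
  ∑ᶠ (ω : Set ℝ) (_ : IsDyadicLen k ω ∧ (ω ∩ Ξ).Nonempty),
    a ω * Set.indicator ω (fun _ => (1 : ℝ)) ξ

/-- The sequence `k ↦ Σ_{|ω| = 2^k} a_ω 1_ω(ξ)`. -/
def dyadicSum (a : Set ℝ → ℝ) (ξ : ℝ) (k : ℤ) : ℝ :=
  ∑ᶠ (ω : Set ℝ) (_ : IsDyadicLen k ω), a ω * Set.indicator ω (fun _ => (1 : ℝ)) ξ

/-- A tile `I × ω ⊆ ℝ⁺ × ℝ⁺` : a rectangle of dyadic intervals of area `1`. -/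
structure WTile where
  I : Set ℝ
  ω : Set ℝ
  hI : IsDyadic I
  hω : IsDyadic ω
  hIsub : I ⊆ Set.Ici 0
  hωsub : ω ⊆ Set.Ici 0
  harea : volume I * volume ω = 1

/-- The subset of the phase plane occupied by a tile. -/
def WTile.carrier (p : WTile) : Set (ℝ × ℝ) := p.I ×ˢ p.ω

/-- The phase-plane projection `Π_S` associated to a region `S` which can be written as a
finite disjoint union of tiles (it is independent of the chosen tiling). -/
def phaseProj (S : Set (ℝ × ℝ)) (f : ℝ → ℝ) : ℝ → ℝ :=
  if h : ∃ ps : Set WTile, ps.Finite ∧ ps.PairwiseDisjoint WTile.carrier ∧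
      (⋃ p ∈ ps, p.carrier) = S then
    fun x => ∑ᶠ p ∈ h.choose,
      (∫ y in Set.Ici (0 : ℝ), f y * wavePacket p.I p.ω y) * wavePacket p.I p.ω x
  else 0

/-- The region of the phase plane occupied by a tree. -/
def treeRegion (T : WTree) : Set (ℝ × ℝ) := ⋃ P ∈ T.carrier, P.I ×ˢ P.ω

/-- `size(Ps, f) = sup_{T ⊆ Ps convex tree} |I_T|^{-1/2} ‖Π_T f‖_{L²}`. -/
def size (Ps : Set Bitile) (f : ℝ → ℝ) : ℝ≥0∞ :=
  ⨆ (T : WTree) (_ : IsTree T ∧ ConvexBitiles T.carrier ∧ T.carrier ⊆ Ps),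
    (volume T.Itop ^ (1 / 2 : ℝ))⁻¹ * eLpNorm (phaseProj (treeRegion T) f) 2 μplus


/-! ### Auxiliary lemmas for Corollary 6.2 -/

section StackAux

lemma two_zpow_pos' (k : ℤ) : (0:ℝ) < 2 ^ k := zpow_pos (by norm_num) k

lemma dyadic_lt (n k : ℤ) : (n:ℝ) * 2 ^ k < ((n:ℝ) + 1) * 2 ^ k := by
  have := two_zpow_pos' k; nlinarith

lemma dyadic_nested {n k n' k' : ℤ} (hk : k ≤ k')
    (h : (Set.Ico ((n:ℝ) * 2 ^ k) (((n:ℝ) + 1) * 2 ^ k) ∩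
      Set.Ico ((n':ℝ) * 2 ^ k') (((n':ℝ) + 1) * 2 ^ k')).Nonempty) :
    Set.Ico ((n:ℝ) * 2 ^ k) (((n:ℝ) + 1) * 2 ^ k) ⊆
      Set.Ico ((n':ℝ) * 2 ^ k') (((n':ℝ) + 1) * 2 ^ k') := by
  obtain ⟨y, ⟨h1, h2⟩, ⟨h3, h4⟩⟩ := h
  set m : ℕ := (k' - k).toNat with hm
  have hmk : k' = k + (m : ℤ) := by rw [hm]; omega
  have h2k : (2:ℝ) ^ k' = 2 ^ k * 2 ^ m := by
    rw [hmk, zpow_add₀ (by norm_num : (2:ℝ) ≠ 0), zpow_natCast]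
  have hkpos := two_zpow_pos' k
  rw [h2k, show (n':ℝ) * (2 ^ k * 2 ^ m) = n' * 2 ^ m * 2 ^ k from by ring] at h3
  rw [h2k, show ((n':ℝ) + 1) * (2 ^ k * 2 ^ m) = ((n':ℝ) + 1) * 2 ^ m * 2 ^ k from by ring] at h4
  have e1 : (n':ℝ) * 2 ^ m < (n:ℝ) + 1 := by
    have hlt : (n':ℝ) * 2 ^ m * 2 ^ k < ((n:ℝ) + 1) * 2 ^ k := lt_of_le_of_lt h3 h2
    exact lt_of_mul_lt_mul_right hlt hkpos.le
  have e1' : (n' * 2 ^ m : ℤ) ≤ n := by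
    have : (n' * 2 ^ m : ℤ) < n + 1 := by exact_mod_cast e1
    omega
  have e2 : (n:ℝ) < ((n':ℝ) + 1) * 2 ^ m := by
    have hlt : (n:ℝ) * 2 ^ k < ((n':ℝ) + 1) * 2 ^ m * 2 ^ k := lt_of_le_of_lt h1 h4
    exact lt_of_mul_lt_mul_right hlt hkpos.le
  have e2' : (n + 1 : ℤ) ≤ (n' + 1) * 2 ^ m := by
    have : (n : ℤ) < (n' + 1) * 2 ^ m := by exact_mod_cast e2
    omega
  rintro z ⟨hz1, hz2⟩
  have c1 : ((n' * 2 ^ m : ℤ) : ℝ) ≤ (n : ℝ) := by exact_mod_cast e1'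
  have c2 : ((n : ℝ) + 1) ≤ (((n' + 1) * 2 ^ m : ℤ) : ℝ) := by exact_mod_cast e2'
  push_cast at c1 c2
  have d1 := mul_le_mul_of_nonneg_right c1 hkpos.le
  have d2 := mul_le_mul_of_nonneg_right c2 hkpos.le
  constructor
  · rw [h2k]; nlinarith
  · rw [h2k]; nlinarith

lemma upperHalf_Ico {a b : ℝ} (h : a < b) :
    upperHalf (Set.Ico a b) = Set.Ico ((a + b) / 2) b := by
  ext z
  simp only [upperHalf, csInf_Ico h, csSup_Ico h, Set.mem_inter_iff, Set.mem_Ico, Set.mem_Ici]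
  constructor
  · rintro ⟨⟨h1, h2⟩, h3⟩; exact ⟨h3, h2⟩
  · rintro ⟨h1, h2⟩; exact ⟨⟨by linarith, h2⟩, h1⟩

lemma upperHalf_subset (s : Set ℝ) : upperHalf s ⊆ s := Set.inter_subset_left

lemma lowerHalf_subset (s : Set ℝ) : lowerHalf s ⊆ s := Set.inter_subset_left

lemma upperHalf_dyadic (n k : ℤ) :
    upperHalf (Set.Ico ((n:ℝ) * 2 ^ k) (((n:ℝ) + 1) * 2 ^ k)) =
      Set.Ico (((2 * n + 1 : ℤ) : ℝ) * 2 ^ (k - 1)) ((((2 * n + 1 : ℤ) : ℝ) + 1) * 2 ^ (k - 1)) := by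
  rw [upperHalf_Ico (dyadic_lt n k)]
  have h2 : (2:ℝ) ^ k = 2 ^ (k - 1) * 2 := by
    rw [← zpow_add_one₀ (by norm_num : (2:ℝ) ≠ 0)]; norm_num
  have e1 : ((n:ℝ) * 2 ^ k + ((n:ℝ) + 1) * 2 ^ k) / 2
      = ((2 * n + 1 : ℤ) : ℝ) * 2 ^ (k - 1) := by push_cast; rw [h2]; ring
  have e2 : ((n:ℝ) + 1) * 2 ^ k = (((2 * n + 1 : ℤ) : ℝ) + 1) * 2 ^ (k - 1) := by
    push_cast; rw [h2]; ring
  rw [e1, e2]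

lemma volume_dyadic (n k : ℤ) :
    volume (Set.Ico ((n:ℝ) * 2 ^ k) (((n:ℝ) + 1) * 2 ^ k)) = ENNReal.ofReal (2 ^ k) := by
  rw [Real.volume_Ico]; congr 1; ring

/-- A chosen `n` for the frequency interval of a bitile. -/
def bN (P : Bitile) : ℤ := P.hω.choose

/-- A chosen scale `k` for the frequency interval of a bitile. -/
def bK (P : Bitile) : ℤ := P.hω.choose_spec.choose

lemma bSpec (P : Bitile) :
    P.ω = Set.Ico ((bN P : ℝ) * 2 ^ bK P) (((bN P : ℝ) + 1) * 2 ^ bK P) :=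
  P.hω.choose_spec.choose_spec

/-- A chosen `n` for the time interval of a bitile. -/
def bNI (P : Bitile) : ℤ := P.hI.choose

/-- A chosen scale `k` for the time interval of a bitile. -/
def bKI (P : Bitile) : ℤ := P.hI.choose_spec.choose

lemma bSpecI (P : Bitile) :
    P.I = Set.Ico ((bNI P : ℝ) * 2 ^ bKI P) (((bNI P : ℝ) + 1) * 2 ^ bKI P) :=
  P.hI.choose_spec.choose_spec

lemma bScale (P : Bitile) : bKI P = 1 - bK P := by
  have h := P.harea
  rw [bSpec, bSpecI, volume_dyadic, volume_dyadic,
    ← ENNReal.ofReal_mul (by positivity)] at h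
  have h2 : ENNReal.ofReal ((2:ℝ) ^ bKI P * 2 ^ bK P) = ENNReal.ofReal 2 := by
    rw [h]; norm_num
  have h3 : (2:ℝ) ^ bKI P * 2 ^ bK P = 2 :=
    (ENNReal.ofReal_eq_ofReal_iff (by positivity) (by norm_num)).mp h2
  have h4 : (2:ℝ) ^ (bKI P + bK P) = 2 ^ (1:ℤ) := by
    rw [zpow_add₀ (by norm_num : (2:ℝ) ≠ 0), h3]; norm_num
  have h5 := zpow_right_injective₀ (by norm_num : (0:ℝ) < 2) (by norm_num : (2:ℝ) ≠ 1) h4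
  omega

lemma uhP (P : Bitile) : upperHalf P.ω =
    Set.Ico (((2 * bN P + 1 : ℤ) : ℝ) * 2 ^ (bK P - 1))
      ((((2 * bN P + 1 : ℤ) : ℝ) + 1) * 2 ^ (bK P - 1)) := by
  rw [bSpec P, upperHalf_dyadic]

lemma uh_nested {P Q : Bitile} (hk : bK P ≤ bK Q)
    (h : (upperHalf P.ω ∩ upperHalf Q.ω).Nonempty) : upperHalf P.ω ⊆ upperHalf Q.ω := by
  rw [uhP P, uhP Q] at h ⊢
  exact dyadic_nested (by omega) h

lemma omega_sub_uh {P Q : Bitile} (hk : bK P < bK Q)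
    (h : (upperHalf P.ω ∩ upperHalf Q.ω).Nonempty) : P.ω ⊆ upperHalf Q.ω := by
  have h' : (P.ω ∩ upperHalf Q.ω).Nonempty :=
    h.mono (Set.inter_subset_inter_left _ (upperHalf_subset _))
  rw [bSpec P, uhP Q] at h' ⊢
  exact dyadic_nested (by omega) h'

lemma I_nested {P Q : Bitile} {x : ℝ} (hk : bK Q ≤ bK P) (hxP : x ∈ P.I) (hxQ : x ∈ Q.I) :
    P.I ⊆ Q.I := by
  have h1 := bScale P; have h2 := bScale Q
  rw [bSpecI P] at hxP ⊢; rw [bSpecI Q] at hxQ ⊢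
  exact dyadic_nested (by omega) ⟨x, hxP, hxQ⟩

lemma Bitile.ext' {P Q : Bitile} (h1 : P.I = Q.I) (h2 : P.ω = Q.ω) : P = Q := by
  cases P; cases Q; cases h1; cases h2; rfl

lemma tile_eq {P Q : Bitile} {x ξ : ℝ} (hxP : x ∈ P.I) (hxQ : x ∈ Q.I)
    (hP : ξ ∈ upperHalf P.ω) (hQ : ξ ∈ upperHalf Q.ω) (hk : bK P = bK Q) : P = Q := by
  have hs1 : upperHalf P.ω ⊆ upperHalf Q.ω := uh_nested (le_of_eq hk) ⟨ξ, hP, hQ⟩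
  have hs2 : upperHalf Q.ω ⊆ upperHalf P.ω := uh_nested (le_of_eq hk.symm) ⟨ξ, hQ, hP⟩
  have e1 : ((2 * bN P + 1 : ℤ) : ℝ) * 2 ^ (bK P - 1) ∈ upperHalf Q.ω := by
    apply hs1
    rw [uhP P]
    exact ⟨le_refl _, dyadic_lt _ _⟩
  have e2 : ((2 * bN Q + 1 : ℤ) : ℝ) * 2 ^ (bK Q - 1) ∈ upperHalf P.ω := by
    apply hs2
    rw [uhP Q]
    exact ⟨le_refl _, dyadic_lt _ _⟩
  rw [uhP Q] at e1
  rw [uhP P] at e2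
  have h1 : ((2 * bN P + 1 : ℤ) : ℝ) * 2 ^ (bK P - 1)
      = ((2 * bN Q + 1 : ℤ) : ℝ) * 2 ^ (bK Q - 1) := le_antisymm e2.1 e1.1
  have hn : bN P = bN Q := by
    rw [hk] at h1
    have hpos : (0:ℝ) < 2 ^ (bK Q - 1) := two_zpow_pos' _
    have : ((2 * bN P + 1 : ℤ) : ℝ) = ((2 * bN Q + 1 : ℤ) : ℝ) :=
      mul_right_cancel₀ (ne_of_gt hpos) h1
    have : (2 * bN P + 1 : ℤ) = 2 * bN Q + 1 := by exact_mod_cast this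
    omega
  have hω : P.ω = Q.ω := by rw [bSpec P, bSpec Q, hn, hk]
  have hI : P.I = Q.I :=
    subset_antisymm (I_nested (le_of_eq hk.symm) hxP hxQ) (I_nested (le_of_eq hk) hxQ hxP)
  exact Bitile.ext' hI hω

lemma vnorm_zero_fun {r : ℝ} (hr : 0 < r) {D : Set ℝ} (m : ℝ → ℝ) (hm : ∀ ξ, m ξ = 0) :
    vnorm r D m = 0 := by
  have h1r : 0 < 1 / r := by positivity
  unfold vnorm
  have h1 : (⨆ ξ ∈ D, (‖m ξ‖₊ : ℝ≥0∞)) = 0 := by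
    simp [hm]
  have h2 : (⨆ (N : ℕ) (u : Fin (N + 1) → ℝ) (_ : StrictMono u) (_ : ∀ i, u i ∈ D),
      (∑ i : Fin N, (‖m (u i.succ) - m (u i.castSucc)‖₊ : ℝ≥0∞) ^ r) ^ (1 / r)) = 0 := by
    apply le_antisymm _ zero_le
    apply iSup_le; intro N; apply iSup_le; intro u; apply iSup_le; intro _
    apply iSup_le; intro _
    have hterm : (∑ i : Fin N, (‖m (u i.succ) - m (u i.castSucc)‖₊ : ℝ≥0∞) ^ r) = 0 := by
      apply Finset.sum_eq_zero
      intro i _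
      rw [hm, hm, sub_zero, nnnorm_zero, ENNReal.coe_zero, ENNReal.zero_rpow_of_pos hr]
    rw [hterm, ENNReal.zero_rpow_of_pos h1r]
  rw [h1, h2, add_zero]

/-- The separating predicate used in the proof of Corollary 6.2. -/
def predA (ξ ξ' : ℝ) (P : Bitile) : Prop := ξ ∈ upperHalf P.ω ∧ ξ' ∉ upperHalf P.ω

end StackAux

/-- Corollary 6.2: for a stack of trees as in Lemma 6.1 and any coefficients `c_P`,
`‖Σ_{P ∈ Ps} c_P 1_{ω_{P_u}}‖_{V^r} ≤ C |Ts|^{1/r} sup_{T ∈ Ts} ‖Σ_{P ∈ T} c_P 1_{ω_{P_u}}‖_{V^r}`. -/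
theorem stack_variation : ∃ C : ℝ, 0 < C ∧ ∀ r : ℝ, 1 ≤ r →
    ∀ x : ℝ, 0 ≤ x → ∀ Ps : Set Bitile, Ps.Finite → (∀ P ∈ Ps, x ∈ P.I) →
    ∀ Ts : Set WTree, Ts.Finite → Ps = (⋃ T ∈ Ts, T.carrier) →
    ((∀ T ∈ Ts, IsTree T ∧ UOverlapping T ∧
        TdMaximalAmong T {T' | IsTree T' ∧ UOverlapping T' ∧ T'.carrier ⊆ Ps}) ∨
      ProperlySorted Ts) →
    ∀ c : Bitile → ℝ,
      vnorm r (Set.Ici 0) (fun ξ =>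
          ∑ᶠ P ∈ Ps, c P * Set.indicator (upperHalf P.ω) (fun _ => (1 : ℝ)) ξ) ≤
        ENNReal.ofReal C * (Ts.ncard : ℝ≥0∞) ^ (1 / r) *
          ⨆ T ∈ Ts, vnorm r (Set.Ici 0) (fun ξ =>
            ∑ᶠ P ∈ T.carrier, c P * Set.indicator (upperHalf P.ω) (fun _ => (1 : ℝ)) ξ) := by
  classical
  refine ⟨5, by norm_num, ?_⟩
  intro r hr x hx Ps hPsFin hxI Ts hTsFin hcover hcase c
  have hr0 : (0:ℝ) < r := lt_of_lt_of_le one_pos hr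
  have hrne : r ≠ 0 := ne_of_gt hr0
  have h1r : (0:ℝ) < 1 / r := by positivity
  set ps : Finset Bitile := hPsFin.toFinset with hps
  set χ : Bitile → ℝ → ℝ :=
    fun P ξ => Set.indicator (upperHalf P.ω) (fun _ => (1:ℝ)) ξ with hχ
  set F : Finset Bitile → ℝ → ℝ := fun t ξ => ∑ P ∈ t, c P * χ P ξ with hF
  set tF : WTree → Finset Bitile := fun T => ps.filter (fun P => P ∈ T.carrier) with htF
  have hmemps : ∀ P, P ∈ ps ↔ P ∈ Ps := fun P => hPsFin.mem_toFinset
  have hfe : ∀ ξ : ℝ,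
      (∑ᶠ P ∈ Ps, c P * Set.indicator (upperHalf P.ω) (fun _ => (1:ℝ)) ξ) = F ps ξ := by
    intro ξ
    rw [hF, ← hPsFin.coe_toFinset, finsum_mem_coe_finset]
  have hsubT : ∀ T ∈ Ts, T.carrier ⊆ Ps := by
    intro T hT
    rw [hcover]
    exact Set.subset_biUnion_of_mem hT
  have hgeq : ∀ T ∈ Ts, (fun ξ : ℝ =>
      ∑ᶠ P ∈ T.carrier, c P * Set.indicator (upperHalf P.ω) (fun _ => (1:ℝ)) ξ)
        = F (tF T) := by
    intro T hT
    funext ξ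
    have hcoe : ((tF T : Finset Bitile) : Set Bitile) = T.carrier := by
      ext P
      simp only [htF, Finset.coe_filter, Set.mem_setOf_eq, hmemps]
      exact ⟨fun h => h.2, fun h => ⟨hsubT T hT h, h⟩⟩
    rw [hF, ← hcoe, finsum_mem_coe_finset]
  simp only [hfe]
  set V : ℝ≥0∞ := ⨆ T ∈ Ts, vnorm r (Set.Ici 0) (fun ξ : ℝ =>
      ∑ᶠ P ∈ T.carrier, c P * Set.indicator (upperHalf P.ω) (fun _ => (1:ℝ)) ξ) with hV
  have hVle : ∀ T ∈ Ts, vnorm r (Set.Ici 0) (F (tF T)) ≤ V := by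
    intro T hT
    rw [hV]
    have hle := le_biSup (fun T => vnorm r (Set.Ici 0) (fun ξ : ℝ =>
      ∑ᶠ P ∈ T.carrier, c P * Set.indicator (upperHalf P.ω) (fun _ => (1:ℝ)) ξ)) hT
    exact le_trans (le_of_eq (congrArg (vnorm r (Set.Ici 0)) (hgeq T hT)).symm) hle
  rcases Ts.eq_empty_or_nonempty with hTse | hTsne
  · have hPse : Ps = ∅ := by rw [hcover, hTse]; simp
    have hps0 : ps = ∅ := by
      rw [hps]
      simp [hPse]
    have h0 : vnorm r (Set.Ici (0:ℝ)) (F ps) = 0 := by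
      apply vnorm_zero_fun hr0
      intro ξ
      rw [hF, hps0]
      simp
    rw [h0]
    exact zero_le
  -- main case : Ts nonempty
  have hmemT : ∀ P ∈ Ps, ∃ T ∈ Ts, P ∈ T.carrier := by
    intro P hP
    rw [hcover] at hP
    simpa using hP
  have hxP : ∀ P ∈ ps, x ∈ P.I := fun P hP => hxI P ((hmemps P).mp hP)
  -- fullness of td-maximal u-overlapping trees
  have fullness : (∀ T ∈ Ts, IsTree T ∧ UOverlapping T ∧
      TdMaximalAmong T {T' | IsTree T' ∧ UOverlapping T' ∧ T'.carrier ⊆ Ps}) →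
      ∀ T ∈ Ts, ∀ P ∈ Ps, P.I ⊆ T.Itop → T.ξtop ∈ upperHalf P.ω → P ∈ T.carrier := by
    intro hA T hT P hP hPI hPξ
    obtain ⟨hTree, hUov, hMax⟩ := hA T hT
    set T2 : WTree := ⟨insert P T.carrier, T.ξtop, T.Itop⟩ with hT2
    have hT2mem : T2 ∈ {T' | IsTree T' ∧ UOverlapping T' ∧ T'.carrier ⊆ Ps} := by
      refine ⟨⟨hTree.1, hTree.2.1, ?_⟩, ?_, ?_⟩
      · intro Q hQ
        rcases Set.mem_insert_iff.mp hQ with h | h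
        · subst h; exact ⟨hPI, upperHalf_subset _ hPξ⟩
        · exact hTree.2.2 Q h
      · intro Q hQ
        rcases Set.mem_insert_iff.mp hQ with h | h
        · subst h; exact hPξ
        · exact hUov Q h
      · intro Q hQ
        rcases Set.mem_insert_iff.mp hQ with h | h
        · subst h; exact hP
        · exact hMax.1.2.2 h
    exact hMax.2 T2 hT2mem rfl rfl (Set.subset_insert _ _) (Set.mem_insert _ _)
  -- properly sorted collections : at most one tile's upper half contains a given point
  have singletonB : ProperlySorted Ts → ∀ ξ : ℝ, ∀ P ∈ ps, ∀ Q ∈ ps,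
      ξ ∈ upperHalf P.ω → ξ ∈ upperHalf Q.ω → P = Q := by
    intro hB ξ P hP Q hQ hPξ hQξ
    obtain ⟨T, hTmem, hPT⟩ := hmemT P ((hmemps P).mp hP)
    obtain ⟨T', hT'mem, hQT'⟩ := hmemT Q ((hmemps Q).mp hQ)
    rcases lt_trichotomy (bK P) (bK Q) with h | h | h
    · exfalso
      have hsub : P.ω ⊆ upperHalf Q.ω := omega_sub_uh h ⟨ξ, hPξ, hQξ⟩
      have hlow : T.ξtop ∈ lowerHalf P.ω := (hB.1 T hTmem).2.1 P hPT
      have hmid : T.ξtop ∈ upperHalf Q.ω := hsub (lowerHalf_subset _ hlow)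
      have hxT : x ∈ T.Itop := ((hB.1 T hTmem).1.2.2 P hPT).1 (hxP P hP)
      exact hB.2.2 T' hT'mem Q hQT' T hTmem ⟨x, hxT, hxP Q hQ⟩ hmid
    · exact tile_eq (hxP P hP) (hxP Q hQ) hPξ hQξ h
    · exfalso
      have hsub : Q.ω ⊆ upperHalf P.ω := omega_sub_uh h ⟨ξ, hQξ, hPξ⟩
      have hlow : T'.ξtop ∈ lowerHalf Q.ω := (hB.1 T' hT'mem).2.1 Q hQT'
      have hmid : T'.ξtop ∈ upperHalf P.ω := hsub (lowerHalf_subset _ hlow)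
      have hxT' : x ∈ T'.Itop := ((hB.1 T' hT'mem).1.2.2 Q hQT').1 (hxP Q hQ)
      exact hB.2.2 T hTmem P hPT T' hT'mem ⟨x, hxT', hxP P hP⟩ hmid
  -- key lemma : one tree captures all tiles whose upper half contains ξ
  have keyLem : ∀ ξ : ℝ, ∃ T ∈ Ts, ∀ P ∈ ps, ξ ∈ upperHalf P.ω → P ∈ T.carrier := by
    intro ξ
    rcases (ps.filter (fun P => ξ ∈ upperHalf P.ω)).eq_empty_or_nonempty with hSe | hSne
    · obtain ⟨T0, hT0⟩ := hTsne
      refine ⟨T0, hT0, ?_⟩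
      intro P hP hPξ
      have hmem : P ∈ ps.filter (fun P => ξ ∈ upperHalf P.ω) :=
        Finset.mem_filter.mpr ⟨hP, hPξ⟩
      rw [hSe] at hmem
      exact absurd hmem (Finset.notMem_empty P)
    · obtain ⟨P0, hP0S, hP0min⟩ :=
        (ps.filter (fun P => ξ ∈ upperHalf P.ω)).exists_min_image bK hSne
      have hP0ps := (Finset.mem_filter.mp hP0S).1
      have hP0ξ := (Finset.mem_filter.mp hP0S).2
      obtain ⟨T0, hT0Ts, hP0T0⟩ := hmemT P0 ((hmemps P0).mp hP0ps)
      refine ⟨T0, hT0Ts, ?_⟩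
      intro P hPps hPξ
      have hkmin : bK P0 ≤ bK P := hP0min P (Finset.mem_filter.mpr ⟨hPps, hPξ⟩)
      rcases hcase with hA | hB
      · obtain ⟨hTree0, hUov0, _⟩ := hA T0 hT0Ts
        have huh : upperHalf P0.ω ⊆ upperHalf P.ω := uh_nested hkmin ⟨ξ, hP0ξ, hPξ⟩
        exact fullness hA T0 hT0Ts P ((hmemps P).mp hPps)
          ((I_nested hkmin (hxP P hPps) (hxP P0 hP0ps)).trans (hTree0.2.2 P0 hP0T0).1)
          (huh (hUov0 P0 hP0T0))
      · rw [singletonB hB ξ P hPps P0 hP0ps hPξ hP0ξ]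
        exact hP0T0
  -- value of F at a point is captured by one tree
  have supLem : ∀ ξ : ℝ, ∃ T ∈ Ts, F ps ξ = F (tF T) ξ := by
    intro ξ
    obtain ⟨T, hT, hcap⟩ := keyLem ξ
    refine ⟨T, hT, ?_⟩
    rw [hF]
    refine (Finset.sum_subset (Finset.filter_subset _ _) ?_).symm
    intro P hPps hPnot
    have hnotmem : ξ ∉ upperHalf P.ω := by
      intro hmem
      exact hPnot (Finset.mem_filter.mpr ⟨hPps, hcap P hPps hmem⟩)
    simp [hχ, Set.indicator_of_notMem hnotmem]
  -- difference formula
  have sumDelta : ∀ (t : Finset Bitile) (ξ ξ' : ℝ),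
      F t ξ' - F t ξ =
        (∑ P ∈ t.filter (predA ξ' ξ), c P) - (∑ P ∈ t.filter (predA ξ ξ'), c P) := by
    intro t ξ ξ'
    rw [hF]
    rw [Finset.sum_filter, Finset.sum_filter, ← Finset.sum_sub_distrib,
      ← Finset.sum_sub_distrib]
    apply Finset.sum_congr rfl
    intro P _
    by_cases h1 : ξ ∈ upperHalf P.ω <;> by_cases h2 : ξ' ∈ upperHalf P.ω <;>
      simp [predA, hχ, Set.indicator_apply, h1, h2]
  -- filter helpers
  have hfilter1 : ∀ (T : WTree) (p : Bitile → Prop), (∀ P ∈ ps, p P → P ∈ T.carrier) →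
      (tF T).filter p = ps.filter p := by
    intro T p h
    ext P
    simp only [htF, Finset.mem_filter, and_assoc]
    exact ⟨fun hh => ⟨hh.1, hh.2.2⟩, fun hh => ⟨hh.1, h P hh.1 hh.2, hh.2⟩⟩
  have hfilter2 : ∀ (T : WTree) (p : Bitile → Prop), (∀ P ∈ ps, p P → P ∉ T.carrier) →
      (tF T).filter p = ∅ := by
    intro T p h
    rw [Finset.filter_eq_empty_iff]
    intro P hP
    simp only [htF, Finset.mem_filter] at hP
    exact fun hp => h P hP.1 hp hP.2
  -- tree difference when one chain is inside and the other chain outside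
  have deltaT : ∀ (T : WTree) (ξ ξ' : ℝ),
      (∀ P ∈ ps, predA ξ ξ' P → P ∈ T.carrier) →
      (∀ P ∈ ps, predA ξ' ξ P → P ∉ T.carrier) →
      F (tF T) ξ' - F (tF T) ξ = -∑ P ∈ ps.filter (predA ξ ξ'), c P := by
    intro T ξ ξ' hin hout
    rw [sumDelta (tF T) ξ ξ', hfilter1 T _ hin, hfilter2 T _ hout]
    simp
  have deltaT2 : ∀ (T : WTree) (ξ ξ' : ℝ),
      (∀ P ∈ ps, predA ξ ξ' P → P ∈ T.carrier) →
      (∀ P ∈ ps, predA ξ' ξ P → P ∈ T.carrier) →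
      F (tF T) ξ' - F (tF T) ξ = F ps ξ' - F ps ξ := by
    intro T ξ ξ' hinA hinB
    rw [sumDelta (tF T) ξ ξ', sumDelta ps ξ ξ', hfilter1 T _ hinA, hfilter1 T _ hinB]
  -- case A : one tree collects the lower chain and avoids the upper chain
  have pairA : (∀ T ∈ Ts, IsTree T ∧ UOverlapping T ∧
      TdMaximalAmong T {T' | IsTree T' ∧ UOverlapping T' ∧ T'.carrier ⊆ Ps}) →
      ∀ ξ ξ' : ℝ, (ps.filter (predA ξ ξ')).Nonempty →
      ∃ T ∈ Ts, (∀ P ∈ ps, predA ξ ξ' P → P ∈ T.carrier) ∧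
        (∀ P ∈ ps, predA ξ' ξ P → P ∉ T.carrier) := by
    intro hA ξ ξ' hne
    obtain ⟨P0, hP0A, hP0min⟩ := Finset.exists_min_image _ bK hne
    have hP0ps := (Finset.mem_filter.mp hP0A).1
    have hP0ξ : ξ ∈ upperHalf P0.ω := (Finset.mem_filter.mp hP0A).2.1
    have hP0ξ' : ξ' ∉ upperHalf P0.ω := (Finset.mem_filter.mp hP0A).2.2
    obtain ⟨T0, hT0, hP0T0⟩ := hmemT P0 ((hmemps P0).mp hP0ps)
    obtain ⟨hTree0, hUov0, _⟩ := hA T0 hT0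
    refine ⟨T0, hT0, ?_, ?_⟩
    · rintro P hPps ⟨h1, h2⟩
      have hk : bK P0 ≤ bK P := hP0min P (Finset.mem_filter.mpr ⟨hPps, h1, h2⟩)
      have huh : upperHalf P0.ω ⊆ upperHalf P.ω := uh_nested hk ⟨ξ, hP0ξ, h1⟩
      exact fullness hA T0 hT0 P ((hmemps P).mp hPps)
        ((I_nested hk (hxP P hPps) (hxP P0 hP0ps)).trans (hTree0.2.2 P0 hP0T0).1)
        (huh (hUov0 P0 hP0T0))
    · rintro Q hQps ⟨h1, h2⟩ hQT0
      have ht1 : T0.ξtop ∈ upperHalf Q.ω := hUov0 Q hQT0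
      have ht2 : T0.ξtop ∈ upperHalf P0.ω := hUov0 P0 hP0T0
      rcases le_total (bK Q) (bK P0) with h | h
      · exact hP0ξ' (uh_nested h ⟨T0.ξtop, ht1, ht2⟩ h1)
      · exact h2 (uh_nested h ⟨T0.ξtop, ht2, ht1⟩ hP0ξ)
  -- in the properly sorted case, the chains are singletons captured by their trees
  have pairB : ProperlySorted Ts → ∀ ξ ξ' : ℝ, (ps.filter (predA ξ ξ')).Nonempty →
      ∃ T ∈ Ts, (∀ P ∈ ps, predA ξ ξ' P → P ∈ T.carrier) := by
    intro hB ξ ξ' hne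
    obtain ⟨P, hPA⟩ := hne
    have hPps := (Finset.mem_filter.mp hPA).1
    have hPinA : predA ξ ξ' P := (Finset.mem_filter.mp hPA).2
    obtain ⟨T, hT, hPT⟩ := hmemT P ((hmemps P).mp hPps)
    refine ⟨T, hT, ?_⟩
    intro P' hP'ps hP'inA
    rw [singletonB hB ξ P' hP'ps P hPps hP'inA.1 hPinA.1]
    exact hPT
  -- central pair inequality
  have pairIneq : ∀ ξ ξ' : ℝ, ∃ T ∈ Ts, ∃ T' ∈ Ts,
      |F ps ξ' - F ps ξ| ≤ |F (tF T) ξ' - F (tF T) ξ| + |F (tF T') ξ' - F (tF T') ξ| := by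
    intro ξ ξ'
    have hΔ : F ps ξ' - F ps ξ =
        (∑ P ∈ ps.filter (predA ξ' ξ), c P) - (∑ P ∈ ps.filter (predA ξ ξ'), c P) :=
      sumDelta ps ξ ξ'
    -- a tree containing the A-chain, in either case
    have treeFor : ∀ η η' : ℝ, (ps.filter (predA η η')).Nonempty →
        ∃ T ∈ Ts, (∀ P ∈ ps, predA η η' P → P ∈ T.carrier) := by
      intro η η' hne
      rcases hcase with hAcase | hBcase
      · obtain ⟨T, hT, hin, _⟩ := pairA hAcase η η' hne
        exact ⟨T, hT, hin⟩
      · exact pairB hBcase η η' hne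
    rcases (ps.filter (predA ξ ξ')).eq_empty_or_nonempty with hAe | hAne
    · rcases (ps.filter (predA ξ' ξ)).eq_empty_or_nonempty with hBe | hBne
      · obtain ⟨T0, hT0⟩ := hTsne
        refine ⟨T0, hT0, T0, hT0, ?_⟩
        have hz : F ps ξ' - F ps ξ = 0 := by rw [hΔ, hAe, hBe]; simp
        rw [hz, abs_zero]
        positivity
      · -- A empty, B nonempty : one tree carries the whole difference
        obtain ⟨T, hT, hin⟩ := treeFor ξ' ξ hBne
        have hout : ∀ P ∈ ps, predA ξ ξ' P → P ∉ T.carrier := by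
          intro P hPps hPA
          have : P ∈ ps.filter (predA ξ ξ') := Finset.mem_filter.mpr ⟨hPps, hPA⟩
          rw [hAe] at this
          exact absurd this (Finset.notMem_empty P)
        have hΔT : F (tF T) ξ - F (tF T) ξ' = -∑ P ∈ ps.filter (predA ξ' ξ), c P :=
          deltaT T ξ' ξ hin hout
        have hEq : F ps ξ' - F ps ξ = F (tF T) ξ' - F (tF T) ξ := by
          rw [hΔ, hAe]
          simp only [Finset.sum_empty, sub_zero]
          linarith [hΔT]
        refine ⟨T, hT, T, hT, ?_⟩
        rw [hEq]
        have := abs_nonneg (F (tF T) ξ' - F (tF T) ξ)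
        linarith
    · rcases (ps.filter (predA ξ' ξ)).eq_empty_or_nonempty with hBe | hBne
      · -- A nonempty, B empty
        obtain ⟨T, hT, hin⟩ := treeFor ξ ξ' hAne
        have hout : ∀ P ∈ ps, predA ξ' ξ P → P ∉ T.carrier := by
          intro P hPps hPB
          have : P ∈ ps.filter (predA ξ' ξ) := Finset.mem_filter.mpr ⟨hPps, hPB⟩
          rw [hBe] at this
          exact absurd this (Finset.notMem_empty P)
        have hΔT : F (tF T) ξ' - F (tF T) ξ = -∑ P ∈ ps.filter (predA ξ ξ'), c P :=
          deltaT T ξ ξ' hin hout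
        have hEq : F ps ξ' - F ps ξ = F (tF T) ξ' - F (tF T) ξ := by
          rw [hΔ, hΔT, hBe]
          simp
        refine ⟨T, hT, T, hT, ?_⟩
        rw [hEq]
        have := abs_nonneg (F (tF T) ξ' - F (tF T) ξ)
        linarith
      · -- both chains nonempty
        have hcomb : ∀ T ∈ Ts, ∀ T' ∈ Ts,
            (F (tF T) ξ' - F (tF T) ξ = -∑ P ∈ ps.filter (predA ξ ξ'), c P) →
            (F (tF T') ξ - F (tF T') ξ' = -∑ P ∈ ps.filter (predA ξ' ξ), c P) →
            ∃ T ∈ Ts, ∃ T' ∈ Ts, |F ps ξ' - F ps ξ| ≤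
              |F (tF T) ξ' - F (tF T) ξ| + |F (tF T') ξ' - F (tF T') ξ| := by
          intro T hT T' hT' hΔT hΔT'
          refine ⟨T', hT', T, hT, ?_⟩
          have hEq : F ps ξ' - F ps ξ =
              (F (tF T') ξ' - F (tF T') ξ) + (F (tF T) ξ' - F (tF T) ξ) := by
            rw [hΔ, hΔT]
            linarith [hΔT']
          rw [hEq]
          have := abs_add_le (F (tF T') ξ' - F (tF T') ξ) (F (tF T) ξ' - F (tF T) ξ)
          linarith
        rcases hcase with hAcase | hBcase
        · obtain ⟨T, hT, hin, hout⟩ := pairA hAcase ξ ξ' hAne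
          obtain ⟨T', hT', hin', hout'⟩ := pairA hAcase ξ' ξ hBne
          exact hcomb T hT T' hT' (deltaT T ξ ξ' hin hout) (deltaT T' ξ' ξ hin' hout')
        · -- properly sorted
          obtain ⟨P, hPA⟩ := hAne
          have hPps := (Finset.mem_filter.mp hPA).1
          have hPinA : predA ξ ξ' P := (Finset.mem_filter.mp hPA).2
          obtain ⟨Q, hQB⟩ := hBne
          have hQps := (Finset.mem_filter.mp hQB).1
          have hQinB : predA ξ' ξ Q := (Finset.mem_filter.mp hQB).2
          obtain ⟨T, hT, hPT⟩ := hmemT P ((hmemps P).mp hPps)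
          obtain ⟨T', hT', hQT'⟩ := hmemT Q ((hmemps Q).mp hQps)
          have hin : ∀ P' ∈ ps, predA ξ ξ' P' → P' ∈ T.carrier := by
            intro P' hP'ps hP'inA
            rw [singletonB hBcase ξ P' hP'ps P hPps hP'inA.1 hPinA.1]
            exact hPT
          have hin' : ∀ P' ∈ ps, predA ξ' ξ P' → P' ∈ T'.carrier := by
            intro P' hP'ps hP'inB
            rw [singletonB hBcase ξ' P' hP'ps Q hQps hP'inB.1 hQinB.1]
            exact hQT'
          by_cases hQT : Q ∈ T.carrier
          · -- both chains inside T
            have hmix : ∀ P' ∈ ps, predA ξ' ξ P' → P' ∈ T.carrier := by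
              intro P' hP'ps hP'inB
              rw [singletonB hBcase ξ' P' hP'ps Q hQps hP'inB.1 hQinB.1]
              exact hQT
            refine ⟨T, hT, T, hT, ?_⟩
            rw [← deltaT2 T ξ ξ' hin hmix]
            have := abs_nonneg (F (tF T) ξ' - F (tF T) ξ)
            linarith
          · -- chains in different trees
            have hout : ∀ P' ∈ ps, predA ξ' ξ P' → P' ∉ T.carrier := by
              intro P' hP'ps hP'inB
              rw [singletonB hBcase ξ' P' hP'ps Q hQps hP'inB.1 hQinB.1]
              exact hQT
            have hPT'false : P ∉ T'.carrier := by
              intro hmem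
              have hTT' : T = T' := by
                by_contra hne
                have hdisj := hBcase.2.1 T hT T' hT' hne
                exact absurd (Set.mem_inter hPT hmem) (by rw [hdisj]; simp)
              rw [← hTT'] at hQT'
              exact hQT hQT'
            have hout' : ∀ P' ∈ ps, predA ξ ξ' P' → P' ∉ T'.carrier := by
              intro P' hP'ps hP'inA
              rw [singletonB hBcase ξ P' hP'ps P hPps hP'inA.1 hPinA.1]
              exact hPT'false
            exact hcomb T hT T' hT' (deltaT T ξ ξ' hin hout) (deltaT T' ξ' ξ hin' hout')
  -- now the ENNReal estimates
  set n : ℝ≥0∞ := (Ts.ncard : ℝ≥0∞) with hn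
  have supPart : (⨆ ξ ∈ Set.Ici (0:ℝ), (‖F ps ξ‖₊ : ℝ≥0∞)) ≤ V := by
    apply iSup_le; intro ξ; apply iSup_le; intro hξ
    obtain ⟨T, hT, heq⟩ := supLem ξ
    rw [heq]
    calc (‖F (tF T) ξ‖₊ : ℝ≥0∞)
        ≤ ⨆ ξ' ∈ Set.Ici (0:ℝ), (‖F (tF T) ξ'‖₊ : ℝ≥0∞) :=
          le_biSup (fun ξ' => (‖F (tF T) ξ'‖₊ : ℝ≥0∞)) hξ
      _ ≤ vnorm r (Set.Ici 0) (F (tF T)) := by unfold vnorm; exact le_self_add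
      _ ≤ V := hVle T hT
  have varPart : (⨆ (N : ℕ) (u : Fin (N + 1) → ℝ) (_ : StrictMono u)
      (_ : ∀ i, u i ∈ Set.Ici (0:ℝ)),
      (∑ i : Fin N, (‖F ps (u i.succ) - F ps (u i.castSucc)‖₊ : ℝ≥0∞) ^ r) ^ (1 / r))
      ≤ (2:ℝ≥0∞) ^ ((r + 1) / r) * (n ^ (1 / r) * V) := by
    apply iSup_le; intro N; apply iSup_le; intro u; apply iSup_le; intro hu
    apply iSup_le; intro hD
    set tsF : Finset WTree := hTsFin.toFinset with htsF
    have hcard : (tsF.card : ℝ≥0∞) = n := by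
      rw [hn, htsF, Set.ncard_eq_toFinset_card Ts hTsFin]
    -- per-tree variation bound
    have treeBound : ∀ T ∈ Ts,
        (∑ i : Fin N, (‖F (tF T) (u i.succ) - F (tF T) (u i.castSucc)‖₊ : ℝ≥0∞) ^ r)
          ≤ V ^ r := by
      intro T hT
      set X := ∑ i : Fin N, (‖F (tF T) (u i.succ) - F (tF T) (u i.castSucc)‖₊ : ℝ≥0∞) ^ r
        with hX
      have h1 : X ^ (1 / r) ≤ V := by
        calc X ^ (1 / r)
            ≤ ⨆ (N' : ℕ) (u' : Fin (N' + 1) → ℝ) (_ : StrictMono u')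
              (_ : ∀ i, u' i ∈ Set.Ici (0:ℝ)),
              (∑ i : Fin N', (‖F (tF T) (u' i.succ) - F (tF T) (u' i.castSucc)‖₊ : ℝ≥0∞) ^ r)
                ^ (1 / r) := by
              apply le_iSup_of_le N
              apply le_iSup_of_le u
              apply le_iSup_of_le hu
              exact le_iSup_of_le hD le_rfl
          _ ≤ vnorm r (Set.Ici 0) (F (tF T)) := by unfold vnorm; exact le_add_self
          _ ≤ V := hVle T hT
      calc X = (X ^ (1 / r)) ^ r := by
            rw [← ENNReal.rpow_mul, one_div, inv_mul_cancel₀ hrne, ENNReal.rpow_one]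
        _ ≤ V ^ r := ENNReal.rpow_le_rpow h1 hr0.le
    -- choose trees for each pair
    choose Tl hTl Tr hTr hbound using fun i : Fin N => pairIneq (u i.castSucc) (u i.succ)
    have hnn : ∀ i : Fin N, (‖F ps (u i.succ) - F ps (u i.castSucc)‖₊ : ℝ≥0∞) ≤
        (‖F (tF (Tl i)) (u i.succ) - F (tF (Tl i)) (u i.castSucc)‖₊ : ℝ≥0∞) +
          (‖F (tF (Tr i)) (u i.succ) - F (tF (Tr i)) (u i.castSucc)‖₊ : ℝ≥0∞) := by
      intro i
      rw [← ENNReal.coe_add, ENNReal.coe_le_coe, ← NNReal.coe_le_coe]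
      push_cast
      simp only [coe_nnnorm, Real.norm_eq_abs]
      exact hbound i
    have h2r : ∀ a b : ℝ≥0∞, (a + b) ^ r ≤ 2 ^ r * (a ^ r + b ^ r) := by
      intro a b
      calc (a + b) ^ r ≤ (2 * max a b) ^ r := by
            apply ENNReal.rpow_le_rpow _ hr0.le
            rw [two_mul]
            exact add_le_add (le_max_left _ _) (le_max_right _ _)
        _ = 2 ^ r * (max a b) ^ r := ENNReal.mul_rpow_of_nonneg _ _ hr0.le
        _ ≤ 2 ^ r * (a ^ r + b ^ r) := by
            apply mul_le_mul_right
            rcases le_total a b with h | h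
            · rw [max_eq_right h]; exact le_add_self
            · rw [max_eq_left h]; exact le_self_add
    have hsum : (∑ i : Fin N, (‖F ps (u i.succ) - F ps (u i.castSucc)‖₊ : ℝ≥0∞) ^ r)
        ≤ 2 ^ r * (2 * (n * V ^ r)) := by
      calc (∑ i : Fin N, (‖F ps (u i.succ) - F ps (u i.castSucc)‖₊ : ℝ≥0∞) ^ r)
          ≤ ∑ i : Fin N, 2 ^ r *
            ((‖F (tF (Tl i)) (u i.succ) - F (tF (Tl i)) (u i.castSucc)‖₊ : ℝ≥0∞) ^ r +
              (‖F (tF (Tr i)) (u i.succ) - F (tF (Tr i)) (u i.castSucc)‖₊ : ℝ≥0∞) ^ r) := by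
            apply Finset.sum_le_sum
            intro i _
            exact le_trans (ENNReal.rpow_le_rpow (hnn i) hr0.le) (h2r _ _)
        _ = 2 ^ r * ((∑ i : Fin N,
              (‖F (tF (Tl i)) (u i.succ) - F (tF (Tl i)) (u i.castSucc)‖₊ : ℝ≥0∞) ^ r) +
            ∑ i : Fin N,
              (‖F (tF (Tr i)) (u i.succ) - F (tF (Tr i)) (u i.castSucc)‖₊ : ℝ≥0∞) ^ r) := by
            rw [← Finset.mul_sum, Finset.sum_add_distrib]
        _ ≤ 2 ^ r * ((n * V ^ r) + (n * V ^ r)) := by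
            apply mul_le_mul_right
            apply add_le_add
            · calc (∑ i : Fin N,
                  (‖F (tF (Tl i)) (u i.succ) - F (tF (Tl i)) (u i.castSucc)‖₊ : ℝ≥0∞) ^ r)
                  ≤ ∑ i : Fin N, ∑ T ∈ tsF,
                    (‖F (tF T) (u i.succ) - F (tF T) (u i.castSucc)‖₊ : ℝ≥0∞) ^ r := by
                    apply Finset.sum_le_sum
                    intro i _
                    exact Finset.single_le_sum (f := fun T =>
                      (‖F (tF T) (u i.succ) - F (tF T) (u i.castSucc)‖₊ : ℝ≥0∞) ^ r)
                      (fun T _ => zero_le) (hTsFin.mem_toFinset.mpr (hTl i))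
                _ = ∑ T ∈ tsF, ∑ i : Fin N,
                    (‖F (tF T) (u i.succ) - F (tF T) (u i.castSucc)‖₊ : ℝ≥0∞) ^ r :=
                    Finset.sum_comm
                _ ≤ ∑ T ∈ tsF, V ^ r :=
                    Finset.sum_le_sum fun T hT => treeBound T (hTsFin.mem_toFinset.mp hT)
                _ = n * V ^ r := by rw [Finset.sum_const, nsmul_eq_mul, hcard]
            · calc (∑ i : Fin N,
                  (‖F (tF (Tr i)) (u i.succ) - F (tF (Tr i)) (u i.castSucc)‖₊ : ℝ≥0∞) ^ r)
                  ≤ ∑ i : Fin N, ∑ T ∈ tsF,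
                    (‖F (tF T) (u i.succ) - F (tF T) (u i.castSucc)‖₊ : ℝ≥0∞) ^ r := by
                    apply Finset.sum_le_sum
                    intro i _
                    exact Finset.single_le_sum (f := fun T =>
                      (‖F (tF T) (u i.succ) - F (tF T) (u i.castSucc)‖₊ : ℝ≥0∞) ^ r)
                      (fun T _ => zero_le) (hTsFin.mem_toFinset.mpr (hTr i))
                _ = ∑ T ∈ tsF, ∑ i : Fin N,
                    (‖F (tF T) (u i.succ) - F (tF T) (u i.castSucc)‖₊ : ℝ≥0∞) ^ r :=
                    Finset.sum_comm
                _ ≤ ∑ T ∈ tsF, V ^ r :=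
                    Finset.sum_le_sum fun T hT => treeBound T (hTsFin.mem_toFinset.mp hT)
                _ = n * V ^ r := by rw [Finset.sum_const, nsmul_eq_mul, hcard]
        _ = 2 ^ r * (2 * (n * V ^ r)) := by ring
    calc (∑ i : Fin N, (‖F ps (u i.succ) - F ps (u i.castSucc)‖₊ : ℝ≥0∞) ^ r) ^ (1 / r)
        ≤ (2 ^ r * (2 * (n * V ^ r))) ^ (1 / r) := ENNReal.rpow_le_rpow hsum h1r.le
      _ = ((2:ℝ≥0∞) ^ (r + 1)) ^ (1 / r) * ((n * V ^ r) ^ (1 / r)) := by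
          rw [← ENNReal.mul_rpow_of_nonneg _ _ h1r.le]
          congr 1
          rw [ENNReal.rpow_add_of_nonneg r 1 hr0.le zero_le_one, ENNReal.rpow_one]
          ring
      _ = (2:ℝ≥0∞) ^ ((r + 1) / r) * (n ^ (1 / r) * V) := by
          rw [← ENNReal.rpow_mul, mul_one_div]
          congr 1
          rw [ENNReal.mul_rpow_of_nonneg _ _ h1r.le, ← ENNReal.rpow_mul, mul_one_div,
            div_self hrne, ENNReal.rpow_one]
  -- combine
  have hone : (1:ℝ≥0∞) ≤ n ^ (1 / r) := by
    have hn1 : (1:ℝ≥0∞) ≤ n := by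
      rw [hn]
      have : 1 ≤ Ts.ncard := (Set.ncard_pos hTsFin).mpr hTsne
      exact_mod_cast this
    calc (1:ℝ≥0∞) = 1 ^ (1 / r) := (ENNReal.one_rpow _).symm
      _ ≤ n ^ (1 / r) := ENNReal.rpow_le_rpow hn1 h1r.le
  have hpow : (2:ℝ≥0∞) ^ ((r + 1) / r) ≤ 4 := by
    have hle : (r + 1) / r ≤ 2 := by
      rw [div_le_iff₀ hr0]; linarith
    calc (2:ℝ≥0∞) ^ ((r + 1) / r) ≤ 2 ^ (2:ℝ) :=
        ENNReal.rpow_le_rpow_of_exponent_le (by norm_num) hle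
      _ = 4 := by
        rw [show (2:ℝ) = ((2:ℕ):ℝ) from by norm_num, ENNReal.rpow_natCast]
        norm_num
  have hfinal : vnorm r (Set.Ici 0) (F ps) ≤ 5 * (n ^ (1 / r) * V) := by
    have hstep : vnorm r (Set.Ici 0) (F ps) ≤ V + (2:ℝ≥0∞) ^ ((r + 1) / r) * (n ^ (1 / r) * V) := by
      unfold vnorm
      exact add_le_add supPart varPart
    calc vnorm r (Set.Ici 0) (F ps)
        ≤ V + (2:ℝ≥0∞) ^ ((r + 1) / r) * (n ^ (1 / r) * V) := hstep
      _ ≤ 1 * (n ^ (1 / r) * V) + 4 * (n ^ (1 / r) * V) := by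
          apply add_le_add
          · rw [one_mul]
            calc V = 1 * V := (one_mul V).symm
              _ ≤ n ^ (1 / r) * V := mul_le_mul_left hone V
          · exact mul_le_mul_left hpow _
      _ = 5 * (n ^ (1 / r) * V) := by ring
  calc vnorm r (Set.Ici 0) (F ps) ≤ 5 * (n ^ (1 / r) * V) := hfinal
    _ = ENNReal.ofReal 5 * n ^ (1 / r) * V := by
        rw [show ENNReal.ofReal 5 = (5:ℝ≥0∞) from by norm_num]
        ring

end
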